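/- arXiv:2405.20500 — 2 statements merged into one kernel-verified Lean document; each statement's English description precedes it below -/
import Mathlib

section
/- For all real x and y, the Ackley function satisfies Ackley(x,y) = 0 if and only if x = 0 and y = 0; in particular the global minimum of the Ackley function is 0, attained exactly at the origin. -/
open Real

/-- The Ackley function on ℝ². -/
noncomputable def ackley (x y : ℝ) : ℝ :=
  -20 * Real.exp (-0.2 * Real.sqrt (0.5 * (x ^ 2 + y ^ 2)))
    - Real.exp (0.5 * (Real.cos (2 * Real.pi * x) + Real.cos (2 * Real.pi * y)))
    + Real.exp 1 + 20

/-- The Ackley function vanishes iff (x,y) = (0,0): its global minimum is 0,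
attained exactly at the origin. -/
theorem ackley_eq_zero_iff (x y : ℝ) : ackley x y = 0 ↔ x = 0 ∧ y = 0 := by
  constructor
  · intro h
    unfold ackley at h
    set s : ℝ := Real.sqrt (0.5 * (x ^ 2 + y ^ 2)) with hs
    have hs0 : 0 ≤ s := Real.sqrt_nonneg _
    have ht : 0.5 * (Real.cos (2 * Real.pi * x) + Real.cos (2 * Real.pi * y)) ≤ 1 := by
      nlinarith [Real.cos_le_one (2 * Real.pi * x), Real.cos_le_one (2 * Real.pi * y)]
    have h1 : Real.exp (-0.2 * s) ≤ 1 := by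
      rw [← Real.exp_zero]
      apply Real.exp_le_exp.mpr
      nlinarith
    have h2 : Real.exp (0.5 * (Real.cos (2 * Real.pi * x) + Real.cos (2 * Real.pi * y)))
        ≤ Real.exp 1 := Real.exp_le_exp.mpr ht
    have h3 : Real.exp (-0.2 * s) = 1 := by nlinarith
    have h4 : -0.2 * s = 0 := by
      exact Real.exp_injective (h3.trans Real.exp_zero.symm)
    have hseq : s = 0 := by linarith
    have hxy : 0.5 * (x ^ 2 + y ^ 2) = 0 := by
      have hnn : 0 ≤ 0.5 * (x ^ 2 + y ^ 2) := by positivity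
      have := Real.sqrt_eq_zero hnn |>.mp hseq
      exact this
    constructor <;> nlinarith [sq_nonneg x, sq_nonneg y]
  · rintro ⟨rfl, rfl⟩
    unfold ackley
    norm_num
end

section
/- The derivative of the expected reward with respect to a preference coordinate satisfies ∂/∂H(a) [∑_b π(b)·r(b)] = π(a)·(r(a) − ∑_b π(b)·r(b)). Precisely: for fixed a ∈ Fin n, the derivative at t = 0 of the function t ↦ ∑_b [exp((H + t·e_a)(b)) / ∑_c exp((H + t·e_a)(c))] · r(b) equals π(a)·(r(a) − ∑_b π(b)·r(b)). -/
/-!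
Write `π = softmax θ` and `Z = ∑ c, exp θ_c`. Along a curve of logits `θ(t)` the expected reward
is the quotient `(∑ b, exp θ_b · r_b) / Z`, and differentiating numerator and denominator gives the
score-function identity `d/dt E_π[r] = ∑ b, π_b θ'_b (r_b - E_π[r])`. Moving only the coordinate `a`
means `θ' = e_a`, which leaves the single term `π_a (r_a - E_π[r])`.
-/

open Real Finset

noncomputable def softmax {ι : Type*} [Fintype ι] (θ : ι → ℝ) (b : ι) : ℝ :=
  exp (θ b) / ∑ c, exp (θ c)

section Softmax

variable {ι : Type*} [Fintype ι]

lemma sum_exp_pos [Nonempty ι] (θ : ι → ℝ) : 0 < ∑ c, exp (θ c) :=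
  sum_pos (fun c _ => exp_pos (θ c)) univ_nonempty

lemma sum_softmax_mul_eq_div (θ g : ι → ℝ) :
    ∑ b, softmax θ b * g b = (∑ b, exp (θ b) * g b) / ∑ c, exp (θ c) := by
  simp only [softmax, sum_div, div_mul_eq_mul_div]

lemma hasDerivAt_sum_exp_mul {θ : ℝ → ι → ℝ} {θ' : ι → ℝ} {x : ℝ}
    (hθ : ∀ b, HasDerivAt (fun t => θ t b) (θ' b) x) (g : ι → ℝ) :
    HasDerivAt (fun t => ∑ b, exp (θ t b) * g b) (∑ b, exp (θ x b) * θ' b * g b) x :=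
  HasDerivAt.fun_sum fun b _ => ((hθ b).exp).mul_const (g b)

theorem hasDerivAt_sum_softmax_mul [Nonempty ι] {θ : ℝ → ι → ℝ} {θ' : ι → ℝ} {x : ℝ}
    (hθ : ∀ b, HasDerivAt (fun t => θ t b) (θ' b) x) (r : ι → ℝ) :
    HasDerivAt (fun t => ∑ b, softmax (θ t) b * r b)
      (∑ b, softmax (θ x) b * θ' b * (r b - ∑ c, softmax (θ x) c * r c)) x := by
  set Z := ∑ c, exp (θ x c)
  have hZ : Z ≠ 0 := (sum_exp_pos (θ x)).ne'
  have hN := hasDerivAt_sum_exp_mul hθ r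
  have hD : HasDerivAt (fun t => ∑ c, exp (θ t c)) (∑ c, exp (θ x c) * θ' c) x := by
    simpa only [Pi.one_apply, mul_one] using hasDerivAt_sum_exp_mul hθ 1
  rw [funext fun t => sum_softmax_mul_eq_div (θ t) r]
  refine (hN.div hD hZ).congr_deriv ?_
  symm
  calc ∑ b, softmax (θ x) b * θ' b * (r b - ∑ c, softmax (θ x) c * r c)
      = ∑ b, softmax (θ x) b * (θ' b * r b)
          - (∑ b, softmax (θ x) b * θ' b) * ∑ c, softmax (θ x) c * r c := by
        simp only [mul_sub, sum_sub_distrib, sum_mul, mul_assoc]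
    _ = _ := by
        simp only [sum_softmax_mul_eq_div]
        field_simp

end Softmax

theorem expected_reward_deriv_general
    (n : ℕ) (H : Fin n → ℝ) (r : Fin n → ℝ) (a : Fin n)
    (pr : Fin n → ℝ) (hpr : ∀ c, pr c = Real.exp (H c) / ∑ d, Real.exp (H d)) :
    HasDerivAt
      (fun t : ℝ =>
        ∑ b, (Real.exp (H b + t * (if b = a then (1 : ℝ) else 0)) /
            ∑ c, Real.exp (H c + t * (if c = a then (1 : ℝ) else 0))) * r b)
      (pr a * (r a - ∑ b, pr b * r b)) 0 := by
  have : Nonempty (Fin n) := ⟨a⟩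
  have hθ : ∀ b, HasDerivAt (fun t : ℝ => H b + t * (if b = a then (1 : ℝ) else 0))
      (if b = a then 1 else 0) 0 := fun b => by
    simpa using ((hasDerivAt_id (0 : ℝ)).mul_const (if b = a then (1 : ℝ) else 0)).const_add (H b)
  have hπ : softmax (fun c => H c + 0 * if c = a then (1 : ℝ) else 0) = pr := by
    funext c
    simp [softmax, hpr]
  refine (hasDerivAt_sum_softmax_mul hθ r).congr_deriv ?_
  rw [hπ]
  simp only [mul_ite, mul_one, mul_zero, ite_mul, zero_mul, sum_ite_eq', mem_univ, if_true]

/-- Derivative of the expected reward w.r.t. a preference coordinate: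
`∂/∂H(a) [∑_b π(b)·r(b)] = π(a)·(r(a) − ∑_b π(b)·r(b))`, where the preference
vector `H` is perturbed by `t` in coordinate `a` and we differentiate at `t = 0`. -/
theorem expected_reward_deriv
    (n : ℕ) (hn : 1 ≤ n) (H : Fin n → ℝ) (r : Fin n → ℝ) (a : Fin n)
    (pr : Fin n → ℝ) (hpr : ∀ c, pr c = Real.exp (H c) / ∑ d, Real.exp (H d)) :
    HasDerivAt
      (fun t : ℝ =>
        ∑ b, (Real.exp (H b + t * (if b = a then (1 : ℝ) else 0)) /
            ∑ c, Real.exp (H c + t * (if c = a then (1 : ℝ) else 0))) * r b)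
      (pr a * (r a - ∑ b, pr b * r b)) 0 :=
  expected_reward_deriv_general n H r a pr hpr
end
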